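/- arXiv:1004.1112 — 2 statements merged into one kernel-verified Lean document; each statement's English description precedes it below -/
import Mathlib

section
/- (Optimal importance proposal for ABC) Let π be a prior density and p(θ) := p(θ|s_obs) ∈ (0,∞) an acceptance probability function with ∫π(θ)p(θ)dθ > 0. Among proposal densities g with g > 0 wherever πp > 0, consider the quantity N_eff/N := (∫π(θ)p(θ)dθ) / E_ABC[π(θ)/g(θ)], where E_ABC is expectation under the density proportional to π(θ)p(θ). Then N_eff/N is maximized, equivalently E_ABC[π/g] is minimized, by g_opt(θ) ∝ π(θ)p(θ)^{1/2}, and the minimum value of E_ABC[π/g] is (∫π(θ)p(θ)^{1/2}dθ)² / ∫π(θ)p(θ)dθ. -/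
open MeasureTheory

/-- Optimal importance proposal for ABC (Appendix A of Fearnhead & Prangle):
for any valid proposal density `g`, `∫ π² p / g ≥ (∫ π √p)²` (Cauchy–Schwarz),
and the proposal `g ∝ π √p` attains the minimum value `(∫ π √p)²`. -/
theorem abc_optimal_proposal {Θ : Type*} [MeasurableSpace Θ] (μ : Measure Θ)
    [SigmaFinite μ] (pri p : Θ → ℝ)
    (hpri : ∀ θ, 0 ≤ pri θ) (hp : ∀ θ, 0 < p θ)
    (hint : Integrable (fun θ => pri θ * Real.sqrt (p θ)) μ)
    (hpos : 0 < ∫ θ, pri θ * p θ ∂μ) :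
    (∀ g : Θ → ℝ, (∀ θ, 0 ≤ g θ) → (∫ θ, g θ ∂μ) = 1 →
        (∀ θ, 0 < pri θ * p θ → 0 < g θ) →
        Integrable (fun θ => (pri θ) ^ 2 * p θ / g θ) μ →
        (∫ θ, pri θ * Real.sqrt (p θ) ∂μ) ^ 2
          ≤ ∫ θ, (pri θ) ^ 2 * p θ / g θ ∂μ) ∧
      (∫ θ, (pri θ) ^ 2 * p θ
          / (pri θ * Real.sqrt (p θ) / (∫ θ', pri θ' * Real.sqrt (p θ') ∂μ)) ∂μ
        = (∫ θ, pri θ * Real.sqrt (p θ) ∂μ) ^ 2) := by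
  set I : ℝ := ∫ θ, pri θ * Real.sqrt (p θ) ∂μ with hI
  have hInn : 0 ≤ I := integral_nonneg fun θ =>
    mul_nonneg (hpri θ) (Real.sqrt_nonneg _)
  constructor
  · intro g hg hg1 hgpos hgint
    -- key pointwise inequality: for t > 0, pri√p ≤ (t·(pri²p/g) + t⁻¹·g)/2
    have key : ∀ t : ℝ, 0 < t →
        ∀ θ, pri θ * Real.sqrt (p θ)
          ≤ (t * ((pri θ) ^ 2 * p θ / g θ) + t⁻¹ * g θ) / 2 := by
      intro t ht θ
      rcases eq_or_lt_of_le (hg θ) with h0 | h0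
      · -- g θ = 0 ⇒ pri θ = 0
        have hpri0 : pri θ = 0 := by
          by_contra h
          have : 0 < pri θ * p θ :=
            mul_pos (lt_of_le_of_ne (hpri θ) (Ne.symm h)) (hp θ)
          exact absurd (hgpos θ this) (by rw [← h0]; exact lt_irrefl 0)
        simp [hpri0, ← h0]
      · have hsq : (pri θ) ^ 2 * p θ = (pri θ * Real.sqrt (p θ)) ^ 2 := by
          rw [mul_pow, Real.sq_sqrt (hp θ).le]
        rw [hsq]
        set a := pri θ * Real.sqrt (p θ)
        have key2 : t * (a ^ 2 / g θ) + t⁻¹ * g θ - 2 * a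
            = (t * a - g θ) ^ 2 / (t * g θ) := by
          field_simp
          ring
        have h4 : 0 ≤ (t * a - g θ) ^ 2 / (t * g θ) :=
          div_nonneg (sq_nonneg _) (mul_pos ht h0).le
        linarith [key2 ▸ h4]
    have hgInt : Integrable g μ := by
      by_contra h
      rw [integral_undef h] at hg1
      exact one_ne_zero hg1.symm
    have hbound : ∀ t : ℝ, 0 < t →
        I ≤ (t * (∫ θ, (pri θ) ^ 2 * p θ / g θ ∂μ) + t⁻¹) / 2 := by
      intro t ht
      have h1 : I ≤ ∫ θ, (t * ((pri θ) ^ 2 * p θ / g θ) + t⁻¹ * g θ) / 2 ∂μ := by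
        apply integral_mono hint
        · exact (((hgint.const_mul t).add (hgInt.const_mul t⁻¹)).div_const 2)
        · exact key t ht
      calc I ≤ _ := h1
        _ = (t * (∫ θ, (pri θ) ^ 2 * p θ / g θ ∂μ) + t⁻¹) / 2 := by
          rw [integral_div, integral_add (hgint.const_mul t) (hgInt.const_mul t⁻¹),
            integral_const_mul, integral_const_mul, hg1, mul_one]
    set A : ℝ := ∫ θ, (pri θ) ^ 2 * p θ / g θ ∂μ with hA
    have hAnn : 0 ≤ A := by
      apply integral_nonneg
      intro θ
      rcases eq_or_lt_of_le (hg θ) with h0 | h0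
      · simp [← h0]
      · exact div_nonneg (mul_nonneg (sq_nonneg _) (hp θ).le) h0.le
    rcases eq_or_lt_of_le hAnn with hA0 | hA0
    · -- A = 0 : show I = 0
      have hI0 : I ≤ 0 := by
        by_contra h
        push_neg at h
        have := hbound (2 / I) (by positivity)
        rw [← hA0] at this
        simp at this
        nlinarith
      have : I = 0 := le_antisymm hI0 hInn
      simp [this, ← hA0]
    · have := hbound (1 / Real.sqrt A) (by positivity)
      have hsA : Real.sqrt A > 0 := Real.sqrt_pos.mpr hA0
      have hAS : Real.sqrt A * Real.sqrt A = A := Real.mul_self_sqrt hAnn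
      have hIle : I ≤ Real.sqrt A := by
        have h2 : (1 / Real.sqrt A) * A + (1 / Real.sqrt A)⁻¹ = 2 * Real.sqrt A := by
          rw [one_div, inv_inv]
          field_simp
          nlinarith
        calc I ≤ ((1 / Real.sqrt A) * A + (1 / Real.sqrt A)⁻¹) / 2 := this
          _ = Real.sqrt A := by rw [h2]; ring
      calc I ^ 2 ≤ Real.sqrt A ^ 2 := by nlinarith
        _ = A := by rw [sq]; exact hAS
  · -- optimality: the integrand equals I * (pri θ * √(p θ)) pointwise
    have heq : ∀ θ, (pri θ) ^ 2 * p θ / (pri θ * Real.sqrt (p θ) / I)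
        = I * (pri θ * Real.sqrt (p θ)) := by
      intro θ
      rcases eq_or_lt_of_le (hpri θ) with h0 | h0
      · simp [← h0]
      · rcases eq_or_ne I 0 with hI0 | hI0
        · simp [hI0]
        · have hsp : Real.sqrt (p θ) > 0 := Real.sqrt_pos.mpr (hp θ)
          have hsq : (pri θ) ^ 2 * p θ = (pri θ * Real.sqrt (p θ)) ^ 2 := by
            rw [mul_pow, Real.sq_sqrt (hp θ).le]
          rw [hsq]
          field_simp
    rw [show (∫ θ, (pri θ) ^ 2 * p θ
          / (pri θ * Real.sqrt (p θ) / I) ∂μ)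
        = ∫ θ, I * (pri θ * Real.sqrt (p θ)) ∂μ from integral_congr_ae
          (Filter.Eventually.of_forall heq)]
    rw [integral_const_mul, ← hI, sq]
end

section
/- (δ is o(h) for mean-zero compactly supported kernel) With δ(thx) := h·[∫ y π(t+h(x+y))K(y)dy]/[∫π(t+h(x+y))K(y)dy] as above: if π is continuous and positive at t, K has compact support R with ∫yK(y)dy = 0 and ∫K(y)dy = 1, then max_{x∈R} |δ evaluated at t+hx| = o(h) as h → 0⁺. -/
/-!
Write the discrepancy as `h • N / D` with `D = ∫ g K` and `N = ∫ (g K) • y`, where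
`g y = f (t + h • (x + y))`. As `h → 0⁺`, `g` is uniformly within `η` of `f t` on the
support of `K` (the points `x + y` range over a bounded set), so `D ≥ f t - η`, while the
mean-zero condition lets us replace `g` by `g - f t` in `N`, giving `‖N‖ ≤ η M` for `M`
bounding the support. Hence `‖N / D‖ ≤ η M / (f t - η)`, which is small with `η`.
-/

open MeasureTheory Filter Function Set Bornology

section KernelAverages

variable {α : Type*} [MeasurableSpace α] {μ : Measure α} {K g : α → ℝ} {a η : ℝ}

theorem integrable_mul_of_abs_sub_le (hK : Integrable K μ) (hg : AEStronglyMeasurable g μ)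
    (hga : ∀ y ∈ support K, |g y - a| ≤ η) : Integrable (fun y => g y * K y) μ := by
  refine (hK.norm.const_mul (|a| + η)).mono' (hg.mul hK.1) (ae_of_all _ fun y => ?_)
  by_cases hy : K y = 0
  · simp [hy]
  · rw [norm_mul, Real.norm_eq_abs (g y)]
    gcongr
    linarith [abs_sub_abs_le_abs_sub (g y) a, hga y hy]

theorem sub_le_integral_mul (hK0 : ∀ y, 0 ≤ K y) (hK : Integrable K μ) (hK1 : ∫ y, K y ∂μ = 1)
    (hg : AEStronglyMeasurable g μ) (hga : ∀ y ∈ support K, |g y - a| ≤ η) :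
    a - η ≤ ∫ y, g y * K y ∂μ :=
  calc a - η = ∫ y, (a - η) * K y ∂μ := by rw [integral_const_mul, hK1, mul_one]
    _ ≤ ∫ y, g y * K y ∂μ := by
      refine integral_mono (hK.const_mul _) (integrable_mul_of_abs_sub_le hK hg hga) fun y => ?_
      by_cases hy : K y = 0
      · simp [hy]
      · exact mul_le_mul_of_nonneg_right (by linarith [(abs_le.mp (hga y hy)).1]) (hK0 y)

end KernelAverages

section KernelMoments

variable {E : Type*} [NormedAddCommGroup E] [NormedSpace ℝ E] [MeasurableSpace E]
  [OpensMeasurableSpace E] [SecondCountableTopology E] {μ : Measure E} {K g : E → ℝ}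
  {a η M : ℝ}

theorem MeasureTheory.Integrable.smul_id_of_norm_le {φ : E → ℝ} (hφ : Integrable φ μ)
    (hM : ∀ y ∈ support φ, ‖y‖ ≤ M) : Integrable (fun y => φ y • y) μ := by
  refine (hφ.norm.mul_const M).mono' (hφ.1.smul aestronglyMeasurable_id) (ae_of_all _ fun y => ?_)
  by_cases hy : φ y = 0
  · simp [hy]
  · rw [norm_smul]
    exact mul_le_mul_of_nonneg_left (hM y hy) (norm_nonneg _)

theorem norm_integral_mul_smul_le (hK0 : ∀ y, 0 ≤ K y) (hK : Integrable K μ)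
    (hK1 : ∫ y, K y ∂μ = 1) (hKmean : ∫ y, K y • y ∂μ = 0) (hg : AEStronglyMeasurable g μ)
    (hga : ∀ y ∈ support K, |g y - a| ≤ η) (hM : ∀ y ∈ support K, ‖y‖ ≤ M) :
    ‖∫ y, (g y * K y) • y ∂μ‖ ≤ η * M := by
  have hgK : Integrable (fun y => (g y * K y) • y) μ :=
    (integrable_mul_of_abs_sub_le hK hg hga).smul_id_of_norm_le fun y hy =>
      hM y (right_ne_zero_of_mul hy)
  have hcentre : ∫ y, (g y * K y) • y ∂μ = ∫ y, ((g y - a) * K y) • y ∂μ := by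
    simp_rw [sub_mul, sub_smul, mul_smul a]
    rw [integral_sub hgK (by exact (hK.smul_id_of_norm_le hM).smul a), integral_smul, hKmean,
      smul_zero, sub_zero]
  rw [hcentre]
  calc ‖∫ y, ((g y - a) * K y) • y ∂μ‖ ≤ ∫ y, η * M * K y ∂μ := by
        refine norm_integral_le_of_norm_le (hK.const_mul _) (ae_of_all _ fun y => ?_)
        by_cases hy : K y = 0
        · simp [hy]
        · rw [norm_smul, norm_mul, Real.norm_of_nonneg (hK0 y), Real.norm_eq_abs, mul_right_comm]
          exact mul_le_mul_of_nonneg_right (mul_le_mul (hga y hy) (hM y hy) (norm_nonneg y)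
            ((abs_nonneg _).trans (hga y hy))) (hK0 y)
    _ = η * M := by rw [integral_const_mul, hK1, mul_one]

theorem norm_inv_integral_smul_le (hK0 : ∀ y, 0 ≤ K y) (hK : Integrable K μ)
    (hK1 : ∫ y, K y ∂μ = 1) (hKmean : ∫ y, K y • y ∂μ = 0) (hg : AEStronglyMeasurable g μ)
    (hga : ∀ y ∈ support K, |g y - a| ≤ η) (hM : ∀ y ∈ support K, ‖y‖ ≤ M) (hηa : η < a) :
    ‖(∫ y, g y * K y ∂μ)⁻¹ • ∫ y, (g y * K y) • y ∂μ‖ ≤ η * M / (a - η) := by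
  have hD := sub_le_integral_mul hK0 hK hK1 hg hga
  have hN := norm_integral_mul_smul_le hK0 hK hK1 hKmean hg hga hM
  rw [norm_smul, norm_inv, Real.norm_of_nonneg (by linarith), inv_mul_eq_div]
  exact div_le_div₀ ((norm_nonneg _).trans hN) hN (sub_pos.mpr hηa) hD

end KernelMoments

theorem ContinuousAt.tendstoUniformlyOn_comp_add_smul {E F : Type*} [SeminormedAddCommGroup E]
    [NormedSpace ℝ E] [UniformSpace F] {f : E → F} {t : E} {S : Set E} (hf : ContinuousAt f t)
    (hS : IsBounded S) :
    TendstoUniformlyOn (fun (h : ℝ) z => f (t + h • z)) (fun _ => f t) (nhds 0) S := by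
  obtain ⟨M, hM⟩ := hS.exists_norm_le
  have hsmul : Tendsto (fun q : ℝ × E => t + q.1 • q.2) (nhds 0 ×ˢ 𝓟 S) (nhds t) := by
    simpa using tendsto_const_nhds.add ((tendsto_fst (g := 𝓟 S)).zero_smul_isBoundedUnder_le
      (isBoundedUnder_of_eventually_le (tendsto_snd.eventually (eventually_principal.2 hM))))
  rw [tendstoUniformlyOn_iff_tendsto]
  exact (tendsto_const_nhds.prodMk_nhds (hf.tendsto.comp hsmul)).mono_right (nhds_le_uniformity _)

theorem noisyABC_discrepancy_littleO_general (d : ℕ) (f K : (Fin d → ℝ) → ℝ)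
    (t : Fin d → ℝ)
    (hfc : Continuous f) (hft : 0 < f t)
    (hK0 : ∀ x, 0 ≤ K x) (hKsupp : HasCompactSupport K)
    (hK1 : ∫ x, K x = 1) (hKmean : (∫ x, K x • x) = 0) :
    ∀ ε > 0, ∀ᶠ hh : ℝ in nhdsWithin 0 (Set.Ioi 0),
      ∀ x ∈ tsupport K,
        ‖hh • ((∫ y, f ((t + hh • x) + hh • y) * K y)⁻¹ •
            ∫ y, (f ((t + hh • x) + hh • y) * K y) • y)‖ ≤ ε * hh := by
  intro ε hε
  have hK : Integrable K := .of_integral_ne_zero (by simp [hK1])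
  obtain ⟨M, hMpos, hM⟩ := hKsupp.isBounded.exists_pos_norm_le
  set η := ε * f t / (M + ε)
  have hηpos : 0 < η := by positivity
  have hηa : η < f t := by rw [div_lt_iff₀ (by positivity)]; nlinarith
  have hηε : η * M / (f t - η) = ε := by
    simp only [η]; field_simp [hMpos.ne']; ring
  have hunif := (hfc.continuousAt (x := t)).tendstoUniformlyOn_comp_add_smul
    (hKsupp.isBounded.add hKsupp.isBounded)
  filter_upwards [self_mem_nhdsWithin,
    (Metric.tendstoUniformlyOn_iff.mp hunif η hηpos).filter_mono nhdsWithin_le_nhds]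
    with h (hpos : 0 < h) hclose x hx
  have hga : ∀ y ∈ support K, |f (t + h • x + h • y) - f t| ≤ η := fun y hy => by
    rw [add_assoc, ← smul_add, abs_sub_comm, ← Real.dist_eq]
    exact (hclose _ (add_mem_add hx (subset_tsupport K hy))).le
  rw [norm_smul, Real.norm_of_nonneg hpos.le, mul_comm ε]
  exact mul_le_mul_of_nonneg_left ((norm_inv_integral_smul_le hK0 hK hK1 hKmean
    (hfc.comp (by fun_prop)).aestronglyMeasurable hga
    (fun y hy => hM y (subset_tsupport K hy)) hηa).trans hηε.le) hpos.le

/-- The concluding estimate of Appendix C of Fearnhead & Prangle: for a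
continuous density `f` positive at `t`, and a compactly supported mean-zero
kernel `K`, the discrepancy `δ(t + h x)` is `o(h)` uniformly over `x` in the
support of `K`. -/
theorem noisyABC_discrepancy_littleO (d : ℕ) (f K : (Fin d → ℝ) → ℝ)
    (t : Fin d → ℝ)
    (hf0 : ∀ s, 0 ≤ f s) (hfint : Integrable f) (hf1 : ∫ s, f s = 1)
    (hfc : Continuous f) (hft : 0 < f t)
    (hK0 : ∀ x, 0 ≤ K x) (hKm : Measurable K) (hKsupp : HasCompactSupport K)
    (hK1 : ∫ x, K x = 1) (hKmean : (∫ x, K x • x) = 0) :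
    ∀ ε > 0, ∀ᶠ hh : ℝ in nhdsWithin 0 (Set.Ioi 0),
      ∀ x ∈ tsupport K,
        ‖hh • ((∫ y, f ((t + hh • x) + hh • y) * K y)⁻¹ •
            ∫ y, (f ((t + hh • x) + hh • y) * K y) • y)‖ ≤ ε * hh :=
  noisyABC_discrepancy_littleO_general d f K t hfc hft hK0 hKsupp hK1 hKmean
end
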